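/- Let G be a graph with a fixed orientation of its edges, let P = v₀v₁…v_n be a path in G, and let f : V(G) → L be entire on P with f(v₀) ≠ 0 and f(v_n) ≠ 0. Suppose g : V(G) → L satisfies: g(v) = f(v) for every v ∈ V(P) with g(v) ≠ ⋆, and f(v) = 0 for every v ∈ V(P) with g(v) = ⋆. Let X = {v ∈ V(P) : g(v) = 0}. Then (1/2)·∫_P dg = Σ_{v ∈ X} λ_{P,f}(v). Furthermore, if g is holomorphic on P, then Σ_{v ∈ X} λ_{P,f}(v) is an integer. -/

import Mathlib

/-- A graph together with a fixed orientation of its edges: each edge `e` has a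
tail `e⁻` and a head `e⁺`. -/
structure OGraph : Type 1 where
  V : Type
  E : Type
  tail : E → V
  head : E → V

/-- The set of labels `L = {−1, 0, 1, ⋆}`. -/
inductive L : Type
  | neg | zero | pos | star
deriving DecidableEq

/-- The integer value of a label (with junk value `0` at `⋆`). -/
def L.toInt : L → ℤ
  | .neg => -1
  | .zero => 0
  | .pos => 1
  | .star => 0

/-- Two vertices are adjacent if some edge has them as its two endpoints. -/
def OGraph.Adj (G : OGraph) (u v : G.V) : Prop :=
  ∃ e : G.E, (G.tail e = u ∧ G.head e = v) ∨ (G.tail e = v ∧ G.head e = u)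

/-- `f` is continuous on `S`: no edge of `G` between vertices of `S` joins the
values `−1` and `1`. -/
def OContinuousOn (G : OGraph) (f : G.V → L) (S : Set G.V) : Prop :=
  ∀ u v : G.V, u ∈ S → v ∈ S → G.Adj u v → ¬(f u = L.neg ∧ f v = L.pos)

/-- `f` is holomorphic on `S`: it is continuous on `S` and moreover no edge of `G`
between vertices of `S` joins the values `0` and `⋆`. -/
def OHolomorphicOn (G : OGraph) (f : G.V → L) (S : Set G.V) : Prop :=
  OContinuousOn G f S ∧
  ∀ u v : G.V, u ∈ S → v ∈ S → G.Adj u v → ¬(f u = L.zero ∧ f v = L.star)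

/-- `f` is entire on `S`: it is continuous on `S` and takes no value `⋆` on `S`. -/
def OEntireOn (G : OGraph) (f : G.V → L) (S : Set G.V) : Prop :=
  OContinuousOn G f S ∧ ∀ v ∈ S, f v ≠ L.star

/-- The derivative `df : E(G) → ℤ`: `df(e) = f(e⁺) − f(e⁻)` if neither endpoint has value
`⋆`, and `df(e) = 0` otherwise. -/
def dF (G : OGraph) (f : G.V → L) (e : G.E) : ℤ :=
  if f (G.tail e) = L.star ∨ f (G.head e) = L.star then 0
  else (f (G.head e)).toInt - (f (G.tail e)).toInt

/-- A walk `(v₀, e₁, v₁, …, e_n, v_n)` in `G`, not necessarily respecting the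
orientation: each edge `e_i` joins `v_{i−1}` and `v_i` (in one of the two directions). -/
structure OWalk (G : OGraph) where
  n : ℕ
  v : Fin (n + 1) → G.V
  e : Fin n → G.E
  valid : ∀ i : Fin n,
    (G.tail (e i) = v i.castSucc ∧ G.head (e i) = v i.succ) ∨
    (G.head (e i) = v i.castSucc ∧ G.tail (e i) = v i.succ)

open scoped Classical in
/-- `I_W = Σ_i ε_i`, where `ε_i(e_i) = +1` if `v_i = e_i⁺`, `ε_i(e_i) = −1` if
`v_i = e_i⁻`, and `ε_i(e) = 0` for `e ≠ e_i`. -/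
noncomputable def OWalk.I {G : OGraph} (W : OWalk G) (e' : G.E) : ℤ :=
  ∑ i : Fin W.n,
    if W.e i = e' then (if G.head (W.e i) = W.v i.succ then 1 else -1) else 0

/-- `∫_W h = Σ_{e ∈ E(G)} I_W(e) · h(e)`. -/
noncomputable def intW {G : OGraph} [Fintype G.E] (W : OWalk G) (h : G.E → ℤ) : ℤ :=
  ∑ e : G.E, W.I e * h e

/-- `λ_{P,f}(v_i) = (f(v_{i+1}) − f(v_{i−1})) / 2` for interior vertices of the path `P`
(with junk value `0` at the two endpoints). -/
def lamP {G : OGraph} (P : OWalk G) (f : G.V → L) (i : Fin (P.n + 1)) : ℚ :=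
  if h : 0 < i.val ∧ i.val < P.n then
    (((f (P.v ⟨i.val + 1, by omega⟩)).toInt : ℚ) -
      ((f (P.v ⟨i.val - 1, by omega⟩)).toInt : ℚ)) / 2
  else 0

/-!
Along the path write `c k = [g(v_k) = 0]` and `F k = f(v_k)`. Since `f` is continuous and
`g` only replaces zeros of `f` by `⋆`, the increment of `g` on the `k`-th edge is
`(c k + c (k+1)) * (F (k+1) - F k)`; summation by parts, using `c 0 = c n = 0`, turns
`∫_P dg` into `∑ k, c k * (F (k+1) - F (k-1)) = 2 * ∑_{v ∈ X} λ(v)`. If `g` is holomorphic,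
no `⋆` is next to a `0`, and then each increment is `c k - c (k+1)` modulo 2, so `∫_P dg`
telescopes to `c 0 - c n = 0` modulo 2.
-/

open Finset

/-- The value of `dF` on an edge with tail label `a` and head label `b`. -/
def L.diff (a b : L) : ℤ :=
  if a = .star ∨ b = .star then 0 else b.toInt - a.toInt

namespace L

theorem diff_swap (a b : L) : b.diff a = -a.diff b := by
  simp only [diff, or_comm (a := b = .star)]
  split_ifs <;> ring

theorem diff_eq_of_agree {a b c d : L} (ha : a ≠ .star) (hb : b ≠ .star)
    (hab : ¬(a = .neg ∧ b = .pos)) (hba : ¬(b = .neg ∧ a = .pos))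
    (hc : c = a ∨ c = .star ∧ a = .zero) (hd : d = b ∨ d = .star ∧ b = .zero) :
    c.diff d = ((if c = .zero then 1 else 0) + (if d = .zero then 1 else 0)) *
      (b.toInt - a.toInt) := by
  cases a <;> cases b <;> cases c <;> cases d <;> simp_all [diff, toInt]

theorem diff_modEq {c d : L} (hcd : ¬(c = .zero ∧ d = .star))
    (hdc : ¬(d = .zero ∧ c = .star)) :
    c.diff d ≡ (if c = .zero then 1 else 0) - (if d = .zero then 1 else 0) [ZMOD 2] := by
  cases c <;> cases d <;> simp_all [diff, toInt] <;> decide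

end L

theorem sum_range_add_mul_sub_eq_sum_Ico {R : Type*} [CommRing R] (c F : ℕ → R) (n : ℕ)
    (hc0 : c 0 = 0) (hcn : c n = 0) :
    ∑ j ∈ range n, (c j + c (j + 1)) * (F (j + 1) - F j) =
      ∑ i ∈ Ico 1 n, c i * (F (i + 1) - F (i - 1)) := by
  rcases Nat.eq_zero_or_pos n with rfl | hn
  · simp
  have expand : ∀ m, 1 ≤ m → ∑ j ∈ range m, (c j + c (j + 1)) * (F (j + 1) - F j) =
      c 0 * (F 1 - F 0) + ∑ i ∈ Ico 1 m, c i * (F (i + 1) - F (i - 1)) +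
        c m * (F m - F (m - 1)) := by
    intro m hm
    induction m, hm using Nat.le_induction with
    | base => simp only [range_one, sum_singleton, Ico_self, sum_empty]; ring
    | succ m hm ih =>
      rw [sum_range_succ, ih, sum_Ico_succ_top hm, Nat.add_sub_cancel]
      ring
  rw [expand n hn, hc0, hcn]
  ring

theorem OGraph.Adj.symm {G : OGraph} {u v : G.V} (h : G.Adj u v) : G.Adj v u :=
  h.imp fun _ => Or.symm

namespace OWalk

variable {G : OGraph} (P : OWalk G)

/-- `P.v` extended to all of `ℕ` by clamping, so that indices can be shifted freely. -/
def vert (j : ℕ) : G.V := P.v (Fin.clamp j P.n)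

theorem vert_val (i : Fin (P.n + 1)) : P.vert i = P.v i := by
  simp [vert, Fin.clamp, Nat.min_eq_left (Nat.le_of_lt_succ i.isLt)]

theorem vert_of_le {j : ℕ} (hj : j ≤ P.n) : P.vert j = P.v ⟨j, Nat.lt_succ_of_le hj⟩ :=
  P.vert_val ⟨j, _⟩

theorem vert_zero : P.vert 0 = P.v 0 := P.vert_val 0

theorem vert_last : P.vert P.n = P.v (Fin.last P.n) := P.vert_val (Fin.last P.n)

theorem vert_mem_range (j : ℕ) : P.vert j ∈ Set.range P.v := ⟨_, rfl⟩

theorem vert_castSucc (i : Fin P.n) : P.vert i = P.v i.castSucc := P.vert_val i.castSucc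

theorem vert_succ (i : Fin P.n) : P.vert (i + 1) = P.v i.succ := P.vert_val i.succ

theorem adj_vert {j : ℕ} (hj : j < P.n) : G.Adj (P.vert j) (P.vert (j + 1)) := by
  rw [P.vert_castSucc ⟨j, hj⟩, P.vert_succ ⟨j, hj⟩]
  obtain ⟨h1, h2⟩ | ⟨h1, h2⟩ := P.valid ⟨j, hj⟩
  exacts [⟨_, .inl ⟨h1, h2⟩⟩, ⟨_, .inr ⟨h2, h1⟩⟩]

open scoped Classical in
theorem intW_eq_sum [Fintype G.E] (h : G.E → ℤ) :
    intW P h = ∑ i : Fin P.n, (if G.head (P.e i) = P.v i.succ then 1 else -1) * h (P.e i) := by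
  simp only [intW, I, sum_mul, ite_mul, zero_mul]
  rw [sum_comm]
  simp

theorem intW_dF [Fintype G.E] (g : G.V → L) :
    intW P (dF G g) = ∑ j ∈ range P.n, (g (P.vert j)).diff (g (P.vert (j + 1))) := by
  rw [P.intW_eq_sum, ← Fin.sum_univ_eq_sum_range]
  refine sum_congr rfl fun i _ => ?_
  rw [P.vert_castSucc, P.vert_succ]
  obtain ⟨ht, hh⟩ | ⟨hh, ht⟩ := P.valid i
  · simp [dF, L.diff, ht, hh]
  · by_cases hloop : P.v i.castSucc = P.v i.succ
    · simp [dF, L.diff, ht, hh, hloop]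
    · rw [if_neg (by rwa [hh]), dF, ht, hh, ← L.diff, L.diff_swap]
      ring

theorem sum_filter_lamP (f g : G.V → L) :
    ∑ i ∈ univ.filter (fun i : Fin (P.n + 1) => g (P.v i) = L.zero), lamP P f i =
      ((∑ k ∈ Ico 1 P.n, (if g (P.vert k) = .zero then 1 else 0) *
        ((f (P.vert (k + 1))).toInt - (f (P.vert (k - 1))).toInt) : ℤ) : ℚ) / 2 := by
  set ψ : ℕ → ℚ := fun k => (((if g (P.vert k) = .zero then 1 else 0) *
    ((f (P.vert (k + 1))).toInt - (f (P.vert (k - 1))).toInt) : ℤ) : ℚ) / 2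
  have hterm (i : Fin (P.n + 1)) : (if g (P.v i) = .zero then lamP P f i else 0) =
      if 0 < (i : ℕ) ∧ (i : ℕ) < P.n then ψ i else 0 := by
    rw [lamP, ← P.vert_val]
    by_cases hi : 0 < (i : ℕ) ∧ (i : ℕ) < P.n
    · rw [dif_pos hi, if_pos hi, ← P.vert_of_le (j := i + 1) (by omega),
        ← P.vert_of_le (j := i - 1) (by omega)]
      split_ifs <;> simp [ψ, *]
    · rw [dif_neg hi, if_neg hi, ite_self]
  calc ∑ i ∈ univ.filter (fun i : Fin (P.n + 1) => g (P.v i) = L.zero), lamP P f i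
      = ∑ k ∈ range (P.n + 1), if 0 < k ∧ k < P.n then ψ k else 0 := by
        rw [sum_filter, ← Fin.sum_univ_eq_sum_range]
        exact sum_congr rfl fun i _ => hterm i
    _ = ∑ k ∈ Ico 1 P.n, ψ k := by
        rw [← sum_filter]
        congr 1
        ext k
        simp only [mem_filter, mem_range, mem_Ico]
        omega
    _ = _ := by rw [← sum_div, ← Int.cast_sum]

theorem intW_dF_eq_sum_Ico [Fintype G.E] {f g : G.V → L}
    (hent : OEntireOn G f (Set.range P.v))
    (h0 : f (P.v 0) ≠ L.zero) (hlast : f (P.v (Fin.last P.n)) ≠ L.zero)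
    (hg1 : ∀ i : Fin (P.n + 1), g (P.v i) ≠ L.star → g (P.v i) = f (P.v i))
    (hg2 : ∀ i : Fin (P.n + 1), g (P.v i) = L.star → f (P.v i) = L.zero) :
    intW P (dF G g) = ∑ k ∈ Ico 1 P.n, (if g (P.vert k) = .zero then 1 else 0) *
        ((f (P.vert (k + 1))).toInt - (f (P.vert (k - 1))).toInt) := by
  have hgf (j : ℕ) :
      g (P.vert j) = f (P.vert j) ∨ g (P.vert j) = .star ∧ f (P.vert j) = .zero := by
    by_cases h : g (P.vert j) = .star
    exacts [.inr ⟨h, hg2 _ h⟩, .inl (hg1 _ h)]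
  have hg_ne {j : ℕ} (hf : f (P.vert j) ≠ .zero) : g (P.vert j) ≠ .zero := by
    rcases hgf j with h | h <;> simp [h, hf]
  rw [P.intW_dF]
  refine (sum_congr rfl fun j hj => ?_).trans (sum_range_add_mul_sub_eq_sum_Ico
    (fun k => if g (P.vert k) = .zero then 1 else 0) (fun k => (f (P.vert k)).toInt) P.n ?_ ?_)
  · have hj := mem_range.mp hj
    have hmem := P.vert_mem_range
    exact L.diff_eq_of_agree (hent.2 _ (hmem j)) (hent.2 _ (hmem (j + 1)))
      (hent.1 _ _ (hmem j) (hmem _) (P.adj_vert hj))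
      (hent.1 _ _ (hmem _) (hmem j) (P.adj_vert hj).symm) (hgf j) (hgf (j + 1))
  · simp [hg_ne (P.vert_zero ▸ h0)]
  · simp [hg_ne (P.vert_last ▸ hlast)]

theorem even_intW_dF [Fintype G.E] {g : G.V → L} (hhol : OHolomorphicOn G g (Set.range P.v))
    (h0 : g (P.v 0) ≠ L.zero) (hlast : g (P.v (Fin.last P.n)) ≠ L.zero) :
    Even (intW P (dF G g)) := by
  have hmem := P.vert_mem_range
  have hmod := Int.ModEq.sum (s := range P.n) fun j hj =>
    L.diff_modEq (hhol.2 _ _ (hmem j) (hmem (j + 1)) (P.adj_vert (mem_range.mp hj)))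
      (hhol.2 _ _ (hmem (j + 1)) (hmem j) (P.adj_vert (mem_range.mp hj)).symm)
  rw [sum_range_sub' (fun j => if g (P.vert j) = .zero then (1 : ℤ) else 0),
    P.vert_zero, P.vert_last, if_neg h0, if_neg hlast, ← P.intW_dF] at hmod
  exact Int.even_iff.mpr hmod

end OWalk

theorem stmt_8_general (G : OGraph) [Fintype G.E] (P : OWalk G)
    (f g : G.V → L)
    (hent : OEntireOn G f (Set.range P.v))
    (h0 : f (P.v 0) ≠ L.zero) (hlast : f (P.v (Fin.last P.n)) ≠ L.zero)
    (hg1 : ∀ i : Fin (P.n + 1), g (P.v i) ≠ L.star → g (P.v i) = f (P.v i))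
    (hg2 : ∀ i : Fin (P.n + 1), g (P.v i) = L.star → f (P.v i) = L.zero) :
    (1 / 2 : ℚ) * (intW P (dF G g) : ℚ) =
      ∑ i ∈ Finset.univ.filter (fun i : Fin (P.n + 1) => g (P.v i) = L.zero), lamP P f i ∧
    (OHolomorphicOn G g (Set.range P.v) →
      ∃ z : ℤ,
        (∑ i ∈ Finset.univ.filter (fun i : Fin (P.n + 1) => g (P.v i) = L.zero),
          lamP P f i) = (z : ℚ)) := by
  have hsum := P.intW_dF_eq_sum_Ico hent h0 hlast hg1 hg2
  refine ⟨by rw [P.sum_filter_lamP, ← hsum]; ring, fun hhol => ?_⟩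
  have hg0 : g (P.v 0) ≠ L.zero := fun h => h0 (hg1 0 (by simp only [h]; decide) ▸ h)
  have hgn : g (P.v (Fin.last P.n)) ≠ L.zero := fun h =>
    hlast (hg1 (Fin.last _) (by simp only [h]; decide) ▸ h)
  obtain ⟨z, hz⟩ := P.even_intW_dF hhol hg0 hgn
  exact ⟨z, by rw [P.sum_filter_lamP, ← hsum, hz]; push_cast; ring⟩

/-- Let `P = v₀v₁…v_n` be a path on which `f` is entire, with `f(v₀) ≠ 0 ≠ f(v_n)`.
Suppose `g` agrees with `f` on vertices of `P` where `g ≠ ⋆`, while `f = 0` on vertices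
of `P` where `g = ⋆`.  Let `X = {v ∈ V(P) : g(v) = 0}`.  Then
`(1/2)·∫_P dg = Σ_{v ∈ X} λ_{P,f}(v)`; moreover if `g` is holomorphic on `P` then this
sum is an integer. -/
theorem stmt_8 (G : OGraph) [Fintype G.E] (P : OWalk G)
    (hpath : Function.Injective P.v)
    (f g : G.V → L)
    (hent : OEntireOn G f (Set.range P.v))
    (h0 : f (P.v 0) ≠ L.zero) (hlast : f (P.v (Fin.last P.n)) ≠ L.zero)
    (hg1 : ∀ i : Fin (P.n + 1), g (P.v i) ≠ L.star → g (P.v i) = f (P.v i))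
    (hg2 : ∀ i : Fin (P.n + 1), g (P.v i) = L.star → f (P.v i) = L.zero) :
    (1 / 2 : ℚ) * (intW P (dF G g) : ℚ) =
      ∑ i ∈ Finset.univ.filter (fun i : Fin (P.n + 1) => g (P.v i) = L.zero), lamP P f i ∧
    (OHolomorphicOn G g (Set.range P.v) →
      ∃ z : ℤ,
        (∑ i ∈ Finset.univ.filter (fun i : Fin (P.n + 1) => g (P.v i) = L.zero),
          lamP P f i) = (z : ℚ)) :=
  stmt_8_general G P f g hent h0 hlast hg1 hg2
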